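/- (Structure of the set of dual solutions of a primal degenerate subproblem.) Consider the MPC subproblem with initial constraint x_0 = x̄, dynamics constraints x_{t+1} = A_t x_t + B_t u_t + a_t, and terminal constraint x_N = d. Fix a primal point (x,u) and suppose both multiplier families (λ_0,…,λ_N,λ_tc) and (λ'_0,…,λ'_N,λ'_tc) satisfy the same stationarity conditions at (x,u): H_{x,t}x_t + H_{xu,t}u_t + f_{x,t} − λ_t + A_tᵀλ_{t+1} = 0 and H_{xu,t}ᵀx_t + H_{u,t}u_t + f_{u,t} + B_tᵀλ_{t+1} = 0 for t = 0,…,N−1, and the terminal stationarity condition −λ_N − λ_tc = 0. Then there exists w ∈ ℝ^{nx} with 𝒮ᵀw = 0 such that λ'_tc − λ_tc = w and λ'_t − λ_t = −Φ(t)ᵀw for all t = 0,…,N. -/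
import Mathlib


open Matrix

/-- **Structure of the set of dual solutions of a primal degenerate subproblem.**
If two multiplier families `(λ, λ_tc)` and `(λ', λ'_tc)` both satisfy the
stationarity conditions of the MPC subproblem (initial constraint, dynamics,
terminal constraint) at the same primal point `(x, u)`, then their difference is a
null-space element: there is `w` with `𝒮ᵀw = 0` (i.e.
`B_tᵀΦ(t+1)ᵀw = 0` for all `t < N`) such that `λ'_tc − λ_tc = w` and
`λ'_t − λ_t = −Φ(t)ᵀw` for all `t ≤ N`. -/
theorem degenerate_dual_solution_set
    (N nx nu : ℕ) (hN : 1 ≤ N)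
    (A : ℕ → Matrix (Fin nx) (Fin nx) ℝ)
    (B : ℕ → Matrix (Fin nx) (Fin nu) ℝ)
    (a : ℕ → Fin nx → ℝ)
    (Hx : ℕ → Matrix (Fin nx) (Fin nx) ℝ)
    (Hxu : ℕ → Matrix (Fin nx) (Fin nu) ℝ)
    (Hu : ℕ → Matrix (Fin nu) (Fin nu) ℝ)
    (fx : ℕ → Fin nx → ℝ) (fu : ℕ → Fin nu → ℝ)
    (Phi : ℕ → Matrix (Fin nx) (Fin nx) ℝ)
    (hPhiN : Phi N = 1)
    (hPhi : ∀ t < N, Phi t = Phi (t + 1) * A t)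
    (x : ℕ → Fin nx → ℝ) (u : ℕ → Fin nu → ℝ)
    (lam lam' : ℕ → Fin nx → ℝ) (lamtc lamtc' : Fin nx → ℝ)
    (hstatx : ∀ t < N,
      Hx t *ᵥ x t + Hxu t *ᵥ u t + fx t - lam t + (A t)ᵀ *ᵥ lam (t + 1) = 0)
    (hstatx' : ∀ t < N,
      Hx t *ᵥ x t + Hxu t *ᵥ u t + fx t - lam' t + (A t)ᵀ *ᵥ lam' (t + 1) = 0)
    (hstatu : ∀ t < N,
      (Hxu t)ᵀ *ᵥ x t + Hu t *ᵥ u t + fu t + (B t)ᵀ *ᵥ lam (t + 1) = 0)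
    (hstatu' : ∀ t < N,
      (Hxu t)ᵀ *ᵥ x t + Hu t *ᵥ u t + fu t + (B t)ᵀ *ᵥ lam' (t + 1) = 0)
    (hterm : -(lam N) - lamtc = 0)
    (hterm' : -(lam' N) - lamtc' = 0) :
    ∃ w : Fin nx → ℝ,
      (∀ t < N, (B t)ᵀ *ᵥ ((Phi (t + 1))ᵀ *ᵥ w) = 0) ∧
      lamtc' - lamtc = w ∧
      (∀ t ≤ N, lam' t - lam t = -((Phi t)ᵀ *ᵥ w)) := by
  set w := lamtc' - lamtc with hw
  have key : ∀ t ≤ N, lam' t - lam t = -((Phi t)ᵀ *ᵥ w) := by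
    have main : ∀ k, k ≤ N → lam' (N - k) - lam (N - k) = -((Phi (N - k))ᵀ *ᵥ w) := by
      intro k
      induction k with
      | zero =>
        intro _
        simp only [Nat.sub_zero, hPhiN, transpose_one, one_mulVec]
        linear_combination hterm - hterm'
      | succ k ih =>
        intro hk
        have hk' : k ≤ N := le_of_lt (Nat.lt_of_lt_of_le (Nat.lt_succ_self k) hk)
        set t := N - (k + 1) with htdef
        have ht : t < N := by omega
        have htk : t + 1 = N - k := by omega
        have ih' : lam' (t + 1) - lam (t + 1) = -((Phi (t + 1))ᵀ *ᵥ w) := by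
          rw [htk]; exact ih hk'
        have hA : (A t)ᵀ *ᵥ lam' (t + 1) - (A t)ᵀ *ᵥ lam (t + 1)
            = -((A t)ᵀ *ᵥ ((Phi (t + 1))ᵀ *ᵥ w)) := by
          rw [← mulVec_neg, ← mulVec_sub, ih']
        have hPhit : (Phi t)ᵀ *ᵥ w = (A t)ᵀ *ᵥ ((Phi (t + 1))ᵀ *ᵥ w) := by
          rw [hPhi t ht, transpose_mul, ← mulVec_mulVec]
        rw [hPhit]
        linear_combination hstatx t ht - hstatx' t ht + hA
    intro t htle
    have h1 : N - (N - t) = t := by omega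
    have := main (N - t) (Nat.sub_le N t)
    rwa [h1] at this
  refine ⟨w, ?_, rfl, key⟩
  intro t ht
  have hkey := key (t + 1) (Nat.succ_le_of_lt ht)
  have hB : (B t)ᵀ *ᵥ lam' (t + 1) - (B t)ᵀ *ᵥ lam (t + 1)
      = -((B t)ᵀ *ᵥ ((Phi (t + 1))ᵀ *ᵥ w)) := by
    rw [← mulVec_neg, ← mulVec_sub, hkey]
  linear_combination hstatu t ht - hstatu' t ht + hB
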